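/- Let n ≥ 1, Σ ∈ S_n, Θ ∈ A_n, and suppose the complex Hermitian matrix S := Σ + (i/2)Θ is positive definite, so that Σ is positive definite. Set Ξ := (1/2)·Σ^{−1/2} Θ Σ^{−1/2} (using the unique positive definite symmetric square root Σ^{1/2} of Σ). Then for every R ∈ S_n, Tr(R(ΣRΣ + ΘRΘ/4)) ≥ (1 − ‖Ξ‖²) · ‖Σ^{1/2} R Σ^{1/2}‖_F², where ‖Ξ‖ is the spectral norm of Ξ and ‖·‖_F is the Frobenius norm. -/

import Mathlib

/-!
Write `Σ = A²` with `A = Σ^{1/2}`, and put `X = A R A`, `Ξ = ½ A⁻¹ Θ A⁻¹`. Cycling the trace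
gives `Tr(R (Σ R Σ + Θ R Θ / 4)) = Tr(X²) + Tr((X Ξ)²)`, and `Tr(X²) = ‖X‖_F²` as `X` is
symmetric. For any square `M`, `Tr(M²) = ⟨Mᵀ, M⟩_F ≥ -‖M‖_F²`; the rows of `X Ξ` are the rows
of `X` mapped by `Ξᵀ`, whose operator norm is `‖Ξ‖`, so `Tr((X Ξ)²) ≥ -‖Ξ‖² ‖X‖_F²`.
-/

open Matrix ComplexOrder

/-- The spectral (operator) norm of a real `n × n` matrix `M`, i.e. the
operator norm of the induced map on Euclidean space, equal to
`sqrt(λ_max(MᵀM))`. -/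
noncomputable def specNorm {n : ℕ} (M : Matrix (Fin n) (Fin n) ℝ) : ℝ :=
  ‖Matrix.toEuclideanCLM (𝕜 := ℝ) M‖

noncomputable def frobNorm {n : ℕ} (M : Matrix (Fin n) (Fin n) ℝ) : ℝ :=
  Real.sqrt (Mᵀ * M).trace

/-- Mathlib's former `Matrix.PosSemidef.sqrt`. -/
noncomputable def Matrix.PosSemidef.sqrt {n : Type*} [Fintype n] [DecidableEq n]
    {𝕜 : Type*} [RCLike 𝕜] {A : Matrix n n 𝕜} (hA : A.PosSemidef) : Matrix n n 𝕜 :=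
  (hA.1.eigenvectorUnitary : Matrix n n 𝕜) * diagonal ((↑) ∘ Real.sqrt ∘ hA.1.eigenvalues) *
    (star (hA.1.eigenvectorUnitary : Matrix n n 𝕜))

namespace Matrix

section Sqrt

variable {n : Type*} [Fintype n] [DecidableEq n] {𝕜 : Type*} [RCLike 𝕜] {A : Matrix n n 𝕜}

lemma PosSemidef.sqrt_mul_self (hA : A.PosSemidef) : hA.sqrt * hA.sqrt = A := by
  set U : Matrix n n 𝕜 := (hA.1.eigenvectorUnitary : Matrix n n 𝕜)
  have hU : star U * U = 1 := Unitary.star_mul_self_of_mem (SetLike.coe_mem _)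
  have hD : diagonal ((↑) ∘ Real.sqrt ∘ hA.1.eigenvalues) *
      diagonal ((↑) ∘ Real.sqrt ∘ hA.1.eigenvalues) =
      diagonal (RCLike.ofReal ∘ hA.1.eigenvalues : n → 𝕜) := by
    rw [diagonal_mul_diagonal]
    congr 1
    funext i
    simp only [Function.comp, ← RCLike.ofReal_mul, Real.mul_self_sqrt (hA.eigenvalues_nonneg i)]
  conv_rhs => rw [hA.1.spectral_theorem, Unitary.conjStarAlgAut_apply]
  calc hA.sqrt * hA.sqrt = U * (diagonal ((↑) ∘ Real.sqrt ∘ hA.1.eigenvalues) * (star U * U) *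
      diagonal ((↑) ∘ Real.sqrt ∘ hA.1.eigenvalues)) * star U := by
        simp only [PosSemidef.sqrt, U, Matrix.mul_assoc]
    _ = _ := by rw [hU, Matrix.mul_one, hD]

lemma PosSemidef.isHermitian_sqrt (hA : A.PosSemidef) : hA.sqrt.IsHermitian := by
  rw [PosSemidef.sqrt, star_eq_conjTranspose]
  refine isHermitian_mul_mul_conjTranspose _ (isHermitian_diagonal_of_self_adjoint _ ?_)
  ext i
  simp

lemma PosDef.isUnit_det_sqrt (hA : A.PosDef) : IsUnit hA.posSemidef.sqrt.det := by
  have h : IsUnit (hA.posSemidef.sqrt.det * hA.posSemidef.sqrt.det) := by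
    rw [← det_mul, hA.posSemidef.sqrt_mul_self]
    exact hA.isUnit.map detMonoidHom
  exact isUnit_of_mul_isUnit_left h

end Sqrt

lemma PosSemidef.transpose_sqrt {n : Type*} [Fintype n] [DecidableEq n] {A : Matrix n n ℝ}
    (hA : A.PosSemidef) : hA.sqrtᵀ = hA.sqrt := by
  simpa only [IsHermitian, conjTranspose_eq_transpose_of_trivial] using hA.isHermitian_sqrt

section Frobenius

variable {l m n : Type*} [Fintype l] [Fintype m] [Fintype n]

lemma trace_transpose_mul_self_eq_sum_sq (M : Matrix m n ℝ) :
    (Mᵀ * M).trace = ∑ i, ∑ j, M i j ^ 2 := by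
  simp only [trace, diag, mul_apply, transpose_apply, sq]
  exact Finset.sum_comm

lemma trace_transpose_mul_self_nonneg (M : Matrix m n ℝ) : 0 ≤ (Mᵀ * M).trace := by
  rw [trace_transpose_mul_self_eq_sum_sq]
  positivity

lemma neg_trace_transpose_mul_self_le_trace_mul_self (M : Matrix n n ℝ) :
    -(Mᵀ * M).trace ≤ (M * M).trace := by
  have h := trace_transpose_mul_self_nonneg (M + Mᵀ)
  simp only [transpose_add, transpose_transpose, add_mul, mul_add, trace_add] at h
  rw [← transpose_mul, trace_transpose, trace_mul_comm M Mᵀ] at h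
  linarith

open scoped Matrix.Norms.L2Operator in
lemma trace_transpose_mul_mul_self_le [DecidableEq m] [DecidableEq n]
    (M : Matrix l m ℝ) (N : Matrix m n ℝ) :
    ((M * N)ᵀ * (M * N)).trace ≤ ‖N‖ ^ 2 * (Mᵀ * M).trace := by
  rw [trace_transpose_mul_self_eq_sum_sq, trace_transpose_mul_self_eq_sum_sq, Finset.mul_sum]
  refine Finset.sum_le_sum fun i _ => ?_
  have h := l2_opNorm_mulVec Nᵀ (WithLp.toLp 2 (M i))
  rw [← conjTranspose_eq_transpose_of_trivial, l2_opNorm_conjTranspose,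
    conjTranspose_eq_transpose_of_trivial] at h
  have h2 := pow_le_pow_left₀ (norm_nonneg _) h 2
  rw [mul_pow, EuclideanSpace.real_norm_sq_eq, EuclideanSpace.real_norm_sq_eq] at h2
  simpa only [mul_apply, PiLp.continuousLinearEquiv_symm_apply, mulVec, dotProduct,
    transpose_apply, mul_comm] using h2

end Frobenius

end Matrix

open scoped Matrix.Norms.L2Operator

lemma specNorm_eq_l2_opNorm {n : ℕ} (M : Matrix (Fin n) (Fin n) ℝ) : specNorm M = ‖M‖ := rfl

lemma frobNorm_sq {n : ℕ} (M : Matrix (Fin n) (Fin n) ℝ) : frobNorm M ^ 2 = (Mᵀ * M).trace :=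
  Real.sq_sqrt (Matrix.trace_transpose_mul_self_nonneg M)

section Coercivity

variable {n : Type*} [Fintype n] [DecidableEq n]

lemma trace_mul_conj_add_eq {A B X Ξ : Matrix n n ℝ} (R Θ : Matrix n n ℝ) (hAB : A * B = 1)
    (hX : X = A * R * A) (hΞ : Ξ = (1 / 2 : ℝ) • (B * Θ * B)) :
    (R * (A * A * R * (A * A) + (1 / 4 : ℝ) • (Θ * R * Θ))).trace =
      (X * X).trace + (X * Ξ * (X * Ξ)).trace := by
  subst hX hΞ
  have hBA : B * A = 1 := mul_eq_one_comm.mp hAB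
  have hXΞ :
      A * R * A * ((1 / 2 : ℝ) • (B * Θ * B)) = (1 / 2 : ℝ) • (A * (R * Θ) * B) := by
    rw [Matrix.mul_smul]
    congr 1
    calc A * R * A * (B * Θ * B) = A * R * (A * B) * Θ * B := by noncomm_ring
      _ = A * (R * Θ) * B := by rw [hAB]; noncomm_ring
  have hsq : A * (R * Θ) * B * (A * (R * Θ) * B) = A * (R * (Θ * R * Θ)) * B := by
    calc A * (R * Θ) * B * (A * (R * Θ) * B) = A * (R * Θ) * (B * A) * (R * Θ) * B := by
          noncomm_ring
      _ = A * (R * (Θ * R * Θ)) * B := by rw [hBA]; noncomm_ring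
  have hconj (N : Matrix n n ℝ) : (A * N * B).trace = N.trace := by
    rw [Matrix.trace_mul_comm, ← Matrix.mul_assoc, hBA, Matrix.one_mul]
  have hcycle : (R * (A * A * R * (A * A))).trace = (A * R * A * (A * R * A)).trace := by
    rw [show R * (A * A * R * (A * A)) = R * A * (A * R * A * A) by noncomm_ring,
      Matrix.trace_mul_comm]
    congr 1
    noncomm_ring
  rw [hXΞ, smul_mul_smul, hsq, Matrix.trace_smul, hconj, mul_add, Matrix.trace_add, hcycle,
    Matrix.mul_smul, Matrix.trace_smul]
  norm_num

lemma one_sub_sq_mul_trace_le {X : Matrix n n ℝ} (hX : Xᵀ = X) (Ξ : Matrix n n ℝ) :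
    (1 - ‖Ξ‖ ^ 2) * (Xᵀ * X).trace ≤ (X * X).trace + (X * Ξ * (X * Ξ)).trace := by
  have hsq := Matrix.neg_trace_transpose_mul_self_le_trace_mul_self (X * Ξ)
  have hop := Matrix.trace_transpose_mul_mul_self_le X Ξ
  have hXX : (Xᵀ * X).trace = (X * X).trace := by rw [hX]
  linarith

end Coercivity

theorem K_coercivity_bound_general
    {n : ℕ}
    (Sgm Θ : Matrix (Fin n) (Fin n) ℝ)
    (hSgmPd : Sgm.PosDef) :
    ∀ R : Matrix (Fin n) (Fin n) ℝ, R.IsSymm →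
      (R * (Sgm * R * Sgm + (1 / 4 : ℝ) • (Θ * R * Θ))).trace ≥
        (1 - specNorm ((1 / 2 : ℝ) •
            ((hSgmPd.posSemidef.sqrt)⁻¹ * Θ * (hSgmPd.posSemidef.sqrt)⁻¹)) ^ 2) *
          frobNorm (hSgmPd.posSemidef.sqrt * R * hSgmPd.posSemidef.sqrt) ^ 2 := by
  intro R hR
  set A := hSgmPd.posSemidef.sqrt
  have hAT : Aᵀ = A := hSgmPd.posSemidef.transpose_sqrt
  have hXT : (A * R * A)ᵀ = A * R * A := by
    rw [Matrix.transpose_mul, Matrix.transpose_mul, hAT, hR.eq, Matrix.mul_assoc]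
  have hquad := trace_mul_conj_add_eq R Θ (Matrix.mul_nonsing_inv A hSgmPd.isUnit_det_sqrt) rfl rfl
  rw [hSgmPd.posSemidef.sqrt_mul_self] at hquad
  rw [ge_iff_le, hquad, frobNorm_sq, specNorm_eq_l2_opNorm]
  exact one_sub_sq_mul_trace_le hXT _

/-- Appendix C of the paper: coercivity bound for the operator
`K(R) = ΣRΣ + ΘRΘ/4`.  If `S = Σ + (i/2)Θ` is positive definite (so that `Σ`
is positive definite), then with `Ξ = (1/2) Σ^{−1/2} Θ Σ^{−1/2}`,
`Tr(R K(R)) ≥ (1 − ‖Ξ‖²) ‖Σ^{1/2} R Σ^{1/2}‖_F²` for all real symmetric `R`. -/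
theorem K_coercivity_bound
    {n : ℕ} (hn : 1 ≤ n)
    (Sgm Θ : Matrix (Fin n) (Fin n) ℝ)
    (hSgmSymm : Sgm.IsSymm) (hΘ : Θᵀ = -Θ)
    (hS : (Sgm.map (Complex.ofReal) +
      (Complex.I / 2) • Θ.map (Complex.ofReal)).PosDef)
    (hSgmPd : Sgm.PosDef) :
    ∀ R : Matrix (Fin n) (Fin n) ℝ, R.IsSymm →
      (R * (Sgm * R * Sgm + (1 / 4 : ℝ) • (Θ * R * Θ))).trace ≥
        (1 - specNorm ((1 / 2 : ℝ) •
            ((hSgmPd.posSemidef.sqrt)⁻¹ * Θ * (hSgmPd.posSemidef.sqrt)⁻¹)) ^ 2) *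
          frobNorm (hSgmPd.posSemidef.sqrt * R * hSgmPd.posSemidef.sqrt) ^ 2 :=
  K_coercivity_bound_general Sgm Θ hSgmPd
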